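/- arXiv:1610.00858 — 6 statements merged into one kernel-verified Lean document; each statement's English description precedes it below -/
import Mathlib

section
/- Let I be a set, let U be a non-principal ultrafilter on I, and let 3 ≤ m, n ≤ ω. For each i ∈ I let P_i be a poset, and let [a], [b] be elements of the ultraproduct ∏_U P_i. Suppose there is u ∈ U such that for all i ∈ u there is an (m,n)-filter Γ_i of P_i with a(i) ∈ Γ_i and b(i) ∉ Γ_i. Then there is an (m,n)-filter Γ of ∏_U P_i with [a] ∈ Γ and [b] ∉ Γ. -/
open Cardinal

universe u

/-- An `(α,β)`-filter: an up-closed set, closed under all existing meets of subsets of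
itself of cardinality `< α`, and meeting every subset of `P` of cardinality `< β` whose
join exists and lies in the set. -/
def IsMNFilter (α β : Cardinal.{u}) {P : Type u} [PartialOrder P] (Γ : Set P) : Prop :=
  (∀ x ∈ Γ, ∀ y : P, x ≤ y → y ∈ Γ) ∧
  (∀ S : Set P, S ⊆ Γ → #S < α → ∀ a : P, IsGLB S a → a ∈ Γ) ∧
  (∀ T : Set P, #T < β → ∀ a : P, IsLUB T a → a ∈ Γ → (T ∩ Γ).Nonempty)

/-- The setoid on `∀ i, P i` identifying functions that agree on a set belonging to `U`. -/
def upSetoid {ι : Type u} (U : Ultrafilter ι) (P : ι → Type u) : Setoid (∀ i, P i) where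
  r x y := {i | x i = y i} ∈ U
  iseqv := by
    refine ⟨fun x => by
        rw [show {i | x i = x i} = Set.univ by simp]; exact Filter.univ_mem,
      fun {x y} h => ?_, fun {x y z} h1 h2 => ?_⟩
    · exact Filter.mem_of_superset h fun i hi => hi.symm
    · filter_upwards [h1, h2] with i hi1 hi2 using hi1.trans hi2

/-- The ultraproduct of the family `P` of posets over the ultrafilter `U`. -/
def UProd {ι : Type u} (U : Ultrafilter ι) (P : ι → Type u) : Type u :=
  Quotient (upSetoid U P)

instance uprodPartialOrder {ι : Type u} (U : Ultrafilter ι) (P : ι → Type u)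
    [∀ i, PartialOrder (P i)] : PartialOrder (UProd U P) where
  le := Quotient.lift₂ (fun x y => {i | x i ≤ y i} ∈ U) (by
    intro a₁ b₁ a₂ b₂ h₁ h₂
    apply propext
    constructor <;> intro h
    · filter_upwards [h, h₁, h₂] with i hle he1 he2
      rw [← he1, ← he2]; exact hle
    · filter_upwards [h, h₁, h₂] with i hle he1 he2
      rw [he1, he2]; exact hle)
  le_refl := by
    rintro ⟨x⟩
    show {i | x i ≤ x i} ∈ U
    rw [show {i | x i ≤ x i} = Set.univ by simp]
    exact Filter.univ_mem
  le_trans := by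
    rintro ⟨x⟩ ⟨y⟩ ⟨z⟩ h1 h2
    show {i | x i ≤ z i} ∈ U
    filter_upwards [(h1 : {i | x i ≤ y i} ∈ U), (h2 : {i | y i ≤ z i} ∈ U)] with i u1 u2
      using le_trans u1 u2
  le_antisymm := by
    rintro ⟨x⟩ ⟨y⟩ h1 h2
    apply Quotient.sound
    show {i | x i = y i} ∈ U
    filter_upwards [(h1 : {i | x i ≤ y i} ∈ U), (h2 : {i | y i ≤ x i} ∈ U)] with i u1 u2
      using le_antisymm u1 u2

/-!
Put `[x] ∈ Γ` iff `x i ∈ Γ i` for `U`-many `i`. Since `m, n ≤ ω`, the meets and joins that the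
filter conditions speak about are of finite sets, and "`c` is the greatest lower bound (least upper
bound) of `s₁, …, sₖ`" is then a first-order property, so by Łoś it holds in the ultraproduct iff
it holds in `U`-many coordinates. Each filter condition on `Γ` thus reduces to the same condition
on `U`-many `Γ i`; for joins, the `U`-many coordinates where some `tⱼ` lies in `Γ i` are split
into finitely many pieces, one of which lies in `U`.
-/

/-- Łoś's theorem for a statement `∀ c, Q c → R c`. -/
theorem Ultrafilter.eventually_forall_of_forall_choice {ι : Type*} {U : Ultrafilter ι}
    {α : ι → Type*} [∀ i, Nonempty (α i)] {Q R : ∀ i, α i → Prop}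
    (h : ∀ c : ∀ i, α i, (∀ᶠ i in U, Q i (c i)) → ∀ᶠ i in U, R i (c i)) :
    ∀ᶠ i in U, ∀ c, Q i c → R i c := by
  by_contra hne
  obtain ⟨c, hc⟩ : ∃ c : ∀ i, α i, ∀ᶠ i in U, Q i (c i) ∧ ¬R i (c i) :=
    Filter.skolem (P := fun i c => Q i c ∧ ¬R i c) |>.1 <|
      (Ultrafilter.eventually_not.2 hne).mono fun i hi => by
        simpa only [not_forall, Classical.not_imp, exists_prop] using hi
  obtain ⟨i, hR, -, hnR⟩ := ((h c (hc.mono fun _ => And.left)).and hc).exists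
  exact hnR hR

namespace UProd

variable {ι : Type u} {P : ι → Type u}

def mk (U : Ultrafilter ι) (x : ∀ i, P i) : UProd U P :=
  Quotient.mk (upSetoid U P) x

def prodSet (U : Ultrafilter ι) (Γ : ∀ i, Set (P i)) : Set (UProd U P) :=
  {q | ∀ᶠ i in U, q.out i ∈ Γ i}

variable {U : Ultrafilter ι}

theorem eventually_out_mk_eq (x : ∀ i, P i) : ∀ᶠ i in U, (mk U x).out i = x i :=
  Quotient.mk_out (s := upSetoid U P) x

theorem mk_mem_prodSet {Γ : ∀ i, Set (P i)} {x : ∀ i, P i} :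
    mk U x ∈ prodSet U Γ ↔ ∀ᶠ i in U, x i ∈ Γ i :=
  Filter.eventually_congr ((eventually_out_mk_eq x).mono fun i hi => by rw [hi])

variable [∀ i, PartialOrder (P i)]

theorem le_iff_out {q r : UProd U P} : q ≤ r ↔ ∀ᶠ i in U, q.out i ≤ r.out i := by
  conv_lhs => rw [← Quotient.out_eq q, ← Quotient.out_eq r]
  rfl

theorem mk_le_iff_out {x : ∀ i, P i} {q : UProd U P} :
    mk U x ≤ q ↔ ∀ᶠ i in U, x i ≤ q.out i := by
  conv_lhs => rw [← Quotient.out_eq q]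
  rfl

theorem le_mk_iff_out {x : ∀ i, P i} {q : UProd U P} :
    q ≤ mk U x ↔ ∀ᶠ i in U, q.out i ≤ x i := by
  conv_lhs => rw [← Quotient.out_eq q]
  rfl

theorem eventually_isGLB_image_out {S : Set (UProd U P)} (hS : S.Finite) {q : UProd U P}
    (hq : IsGLB S q) : ∀ᶠ i in U, IsGLB ((fun s => s.out i) '' S) (q.out i) := by
  have hlower : ∀ᶠ i in U, ∀ s ∈ S, q.out i ≤ s.out i :=
    (Filter.eventually_all_finite hS).2 fun s hs => le_iff_out.1 (hq.1 hs)
  have : ∀ i, Nonempty (P i) := fun i => ⟨q.out i⟩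
  have hgreatest : ∀ᶠ i in U, ∀ c, (∀ s ∈ S, c ≤ s.out i) → c ≤ q.out i := by
    refine Ultrafilter.eventually_forall_of_forall_choice fun c hc => mk_le_iff_out.1 (hq.2 ?_)
    exact fun s hs => mk_le_iff_out.2 (hc.mono fun i hi => hi s hs)
  filter_upwards [hlower, hgreatest] with i hl hg
  exact ⟨Set.forall_mem_image.2 hl, fun c hc => hg c (Set.forall_mem_image.1 hc)⟩

theorem eventually_isLUB_image_out {T : Set (UProd U P)} (hT : T.Finite) {q : UProd U P}
    (hq : IsLUB T q) : ∀ᶠ i in U, IsLUB ((fun t => t.out i) '' T) (q.out i) := by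
  have hupper : ∀ᶠ i in U, ∀ t ∈ T, t.out i ≤ q.out i :=
    (Filter.eventually_all_finite hT).2 fun t ht => le_iff_out.1 (hq.1 ht)
  have : ∀ i, Nonempty (P i) := fun i => ⟨q.out i⟩
  have hleast : ∀ᶠ i in U, ∀ c, (∀ t ∈ T, t.out i ≤ c) → q.out i ≤ c := by
    refine Ultrafilter.eventually_forall_of_forall_choice fun c hc => le_mk_iff_out.1 (hq.2 ?_)
    exact fun t ht => le_mk_iff_out.2 (hc.mono fun i hi => hi t ht)
  filter_upwards [hupper, hleast] with i hu hl
  exact ⟨Set.forall_mem_image.2 hu, fun c hc => hl c (Set.forall_mem_image.1 hc)⟩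

variable {Γ : ∀ i, Set (P i)} {α β : Cardinal.{u}}

theorem prodSet_mem_of_le (hΓ : ∀ᶠ i in U, IsMNFilter α β (Γ i)) {q r : UProd U P}
    (hq : q ∈ prodSet U Γ) (hqr : q ≤ r) : r ∈ prodSet U Γ := by
  filter_upwards [hΓ, hq, le_iff_out.1 hqr] with i hΓi hqi hqri
  exact hΓi.1 _ hqi _ hqri

theorem prodSet_isGLB_mem (hα : α ≤ ℵ₀) (hΓ : ∀ᶠ i in U, IsMNFilter α β (Γ i))
    {S : Set (UProd U P)} (hSΓ : S ⊆ prodSet U Γ) (hSα : #S < α) {q : UProd U P}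
    (hq : IsGLB S q) : q ∈ prodSet U Γ := by
  have hS : S.Finite := lt_aleph0_iff_set_finite.1 (hSα.trans_le hα)
  have hmem : ∀ᶠ i in U, ∀ s ∈ S, s.out i ∈ Γ i :=
    (Filter.eventually_all_finite hS).2 fun s hs => hSΓ hs
  filter_upwards [hΓ, hmem, eventually_isGLB_image_out hS hq] with i hΓi hmemi hglb
  exact hΓi.2.1 _ (Set.image_subset_iff.2 hmemi) (mk_image_le.trans_lt hSα) _ hglb

theorem prodSet_inter_nonempty_of_isLUB (hβ : β ≤ ℵ₀) (hΓ : ∀ᶠ i in U, IsMNFilter α β (Γ i))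
    {T : Set (UProd U P)} (hTβ : #T < β) {q : UProd U P} (hq : IsLUB T q)
    (hqΓ : q ∈ prodSet U Γ) : (T ∩ prodSet U Γ).Nonempty := by
  have hT : T.Finite := lt_aleph0_iff_set_finite.1 (hTβ.trans_le hβ)
  have hsome : ∀ᶠ i in U, ∃ t ∈ T, t.out i ∈ Γ i := by
    filter_upwards [hΓ, hqΓ, eventually_isLUB_image_out hT hq] with i hΓi hqi hlub
    obtain ⟨_, ⟨t, ht, rfl⟩, htΓ⟩ := hΓi.2.2 _ (mk_image_le.trans_lt hTβ) _ hlub hqi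
    exact ⟨t, ht, htΓ⟩
  obtain ⟨t, ht, htΓ⟩ := (Ultrafilter.eventually_exists_mem_iff hT).1 hsome
  exact ⟨t, ht, htΓ⟩

theorem isMNFilter_prodSet (hα : α ≤ ℵ₀) (hβ : β ≤ ℵ₀)
    (hΓ : ∀ᶠ i in U, IsMNFilter α β (Γ i)) : IsMNFilter α β (prodSet U Γ) :=
  ⟨fun _ hq _ hqr => prodSet_mem_of_le hΓ hq hqr,
    fun _ hSΓ hSα _ hq => prodSet_isGLB_mem hα hΓ hSΓ hSα hq,
    fun _ hTβ _ hq hqΓ => prodSet_inter_nonempty_of_isLUB hβ hΓ hTβ hq hqΓ⟩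

end UProd

theorem statement1_general {ι : Type u} (U : Ultrafilter ι)
    (m n : Cardinal.{u}) (hmω : m ≤ ℵ₀) (hnω : n ≤ ℵ₀)
    (P : ι → Type u) [∀ i, PartialOrder (P i)] (a b : ∀ i, P i)
    (u : Set ι) (hu : u ∈ U)
    (h : ∀ i ∈ u, ∃ Γi : Set (P i), IsMNFilter m n Γi ∧ a i ∈ Γi ∧ b i ∉ Γi) :
    ∃ Γ : Set (UProd U P), IsMNFilter m n Γ ∧
      Quotient.mk (upSetoid U P) a ∈ Γ ∧ Quotient.mk (upSetoid U P) b ∉ Γ := by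
  obtain ⟨Γ, hΓ⟩ : ∃ Γ : ∀ i, Set (P i),
      ∀ᶠ i in U, IsMNFilter m n (Γ i) ∧ a i ∈ Γ i ∧ b i ∉ Γ i :=
    Filter.skolem.1 (Filter.mem_of_superset hu h)
  refine ⟨UProd.prodSet U Γ, UProd.isMNFilter_prodSet hmω hnω (hΓ.mono fun _ => And.left),
    UProd.mk_mem_prodSet.2 (hΓ.mono fun _ hi => hi.2.1), fun hb => ?_⟩
  obtain ⟨i, hbi, -, -, hbi'⟩ := ((UProd.mk_mem_prodSet.1 hb).and hΓ).exists
  exact hbi' hbi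

/-- Separating `(m,n)`-filters in `U`-many coordinates yield a separating
`(m,n)`-filter in the ultraproduct. -/
theorem statement1 {ι : Type u} (U : Ultrafilter ι) (hU : ∀ i : ι, U ≠ pure i)
    (m n : Cardinal.{u}) (hm3 : 3 ≤ m) (hmω : m ≤ ℵ₀) (hn3 : 3 ≤ n) (hnω : n ≤ ℵ₀)
    (P : ι → Type u) [∀ i, PartialOrder (P i)] (a b : ∀ i, P i)
    (u : Set ι) (hu : u ∈ U)
    (h : ∀ i ∈ u, ∃ Γi : Set (P i), IsMNFilter m n Γi ∧ a i ∈ Γi ∧ b i ∉ Γi) :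
    ∃ Γ : Set (UProd U P), IsMNFilter m n Γ ∧
      Quotient.mk (upSetoid U P) a ∈ Γ ∧ Quotient.mk (upSetoid U P) b ∉ Γ :=
  statement1_general U m n hmω hnω P a b u hu h
end

section
/- For every k ∈ ω: in P_k, the element p is the join (least upper bound) of every subset of N_0 = {a,b,c,d} with at least two elements, and these are the only non-trivial joins in P_k; that is, if y ∈ P_k and X ⊆ P_k is a nonempty set with y = ⋁X and y ∉ X, then y = p and X is a non-singleton subset of N_0. -/
open Cardinal

universe u

/-- The levels `N n`: `N 0` has four elements (`a`, `b`, `c`, `d`), and `N (n+1)` has one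
element `e_{xy}` for each unordered pair of distinct elements `x`, `y` of `N n`. -/
def N : ℕ → Type
  | 0 => Fin 4
  | n + 1 => { s : Sym2 (N n) // ¬s.IsDiag }

/-- The element `e_{xy}` of `N (n+1)` corresponding to distinct `x y : N n`. -/
def mkE {n : ℕ} (x y : N n) (h : x ≠ y) : N (n + 1) :=
  ⟨s(x, y), by simp [h]⟩

/-- The carrier of the poset `P_k`: the elements `p`, `q`, the elements of `N n` for
`n ≤ k` (constructor `node`), and two elements `x'` (constructor `prime`) and `x''`
(constructor `dprime`) for every element `x` of `N n` with `n ≤ k`. -/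
inductive Elt (k : ℕ) : Type
  | p : Elt k
  | q : Elt k
  | node (n : ℕ) (hn : n ≤ k) (x : N n) : Elt k
  | prime (n : ℕ) (hn : n ≤ k) (x : N n) : Elt k
  | dprime (n : ℕ) (hn : n ≤ k) (x : N n) : Elt k

/-- The order on `P_k`: (1) `x < p` for `x ∈ N₀`; (2) `x < x'` and `x < x''` for
`x ∈ N_n`, `n ≤ k`; (3) `e_{xy} < x', x'', y', y''` for `e_{xy} ∈ N_{n+1}`, `n + 1 ≤ k`;
(4) `q < x'` and `q < x''` for `x ∈ N_k`; (5) reflexivity; and nothing else. -/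
inductive Le (k : ℕ) : Elt k → Elt k → Prop
  | refl (x : Elt k) : Le k x x
  | node_p (h0 : 0 ≤ k) (x : N 0) : Le k (.node 0 h0 x) .p
  | node_prime (n : ℕ) (hn : n ≤ k) (x : N n) : Le k (.node n hn x) (.prime n hn x)
  | node_dprime (n : ℕ) (hn : n ≤ k) (x : N n) : Le k (.node n hn x) (.dprime n hn x)
  | e_prime (n : ℕ) (hn : n + 1 ≤ k) (e : N (n + 1)) (x : N n) (hx : x ∈ e.1) :
      Le k (.node (n + 1) hn e) (.prime n (Nat.le_of_succ_le hn) x)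
  | e_dprime (n : ℕ) (hn : n + 1 ≤ k) (e : N (n + 1)) (x : N n) (hx : x ∈ e.1) :
      Le k (.node (n + 1) hn e) (.dprime n (Nat.le_of_succ_le hn) x)
  | q_prime (x : N k) : Le k .q (.prime k le_rfl x)
  | q_dprime (x : N k) : Le k .q (.dprime k le_rfl x)

lemma Le.eq_of_le_node {k n : ℕ} {x : Elt k} {hn : n ≤ k} {w : N n}
    (h : Le k x (Elt.node n hn w)) : x = Elt.node n hn w := by
  cases h; rfl

lemma Le.eq_of_le_q {k : ℕ} {x : Elt k} (h : Le k x Elt.q) : x = Elt.q := by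
  cases h; rfl

lemma Le.left_cases {k : ℕ} {x y : Elt k} (h : Le k x y) :
    x = y ∨ (∃ n hn w, x = Elt.node n hn w) ∨ x = Elt.q := by
  cases h with
  | refl => exact Or.inl rfl
  | node_p h0 w => exact Or.inr (Or.inl ⟨_, _, _, rfl⟩)
  | node_prime n hn w => exact Or.inr (Or.inl ⟨_, _, _, rfl⟩)
  | node_dprime n hn w => exact Or.inr (Or.inl ⟨_, _, _, rfl⟩)
  | e_prime n hn e w hw => exact Or.inr (Or.inl ⟨_, _, _, rfl⟩)
  | e_dprime n hn e w hw => exact Or.inr (Or.inl ⟨_, _, _, rfl⟩)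
  | q_prime w => exact Or.inr (Or.inr rfl)
  | q_dprime w => exact Or.inr (Or.inr rfl)

/-- `P_k` as a partial order, with order relation `Le k`. -/
instance EltPartialOrder (k : ℕ) : PartialOrder (Elt k) where
  le := Le k
  le_refl := Le.refl
  le_trans := by
    intro x y z h1 h2
    rcases h2.left_cases with rfl | ⟨n, hn, w, rfl⟩ | rfl
    · exact h1
    · rw [h1.eq_of_le_node]; exact h2
    · rw [h1.eq_of_le_q]; exact h2
  le_antisymm := by
    intro x y h1 h2
    rcases h1.left_cases with rfl | ⟨n, hn, w, rfl⟩ | rfl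
    · rfl
    · exact (h2.eq_of_le_node).symm
    · exact (h2.eq_of_le_q).symm

/-- `v` is a member of (the copy of) `N_n` inside `P_k`. -/
def inN (k n : ℕ) (v : Elt k) : Prop := ∃ (hn : n ≤ k) (w : N n), v = Elt.node n hn w

/-- `v` is a member of (the copy of) `N̂_n` inside `P_k`. -/
def inNhat (k n : ℕ) (v : Elt k) : Prop :=
  ∃ (hn : n ≤ k) (w : N n), v = Elt.prime n hn w ∨ v = Elt.dprime n hn w

lemma Le.p_le {k : ℕ} {z : Elt k} (h : Le k Elt.p z) : z = Elt.p := by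
  cases h; rfl

lemma Le.le_p {k : ℕ} {x : Elt k} (h : Le k x Elt.p) :
    x = Elt.p ∨ ∃ (h0 : 0 ≤ k) (w : N 0), x = Elt.node 0 h0 w := by
  cases h with
  | refl => exact Or.inl rfl
  | node_p h0 w => exact Or.inr ⟨h0, w, rfl⟩

lemma Le.le_prime {k n : ℕ} {hn : n ≤ k} {w : N n} {x : Elt k}
    (h : Le k x (Elt.prime n hn w)) :
    x = Elt.prime n hn w ∨ Le k x (Elt.dprime n hn w) := by
  cases h with
  | refl => exact Or.inl rfl
  | node_prime => exact Or.inr (Le.node_dprime _ _ _)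
  | e_prime _ _ _ _ hx => exact Or.inr (Le.e_dprime _ _ _ _ hx)
  | q_prime => exact Or.inr (Le.q_dprime _)

lemma Le.le_dprime {k n : ℕ} {hn : n ≤ k} {w : N n} {x : Elt k}
    (h : Le k x (Elt.dprime n hn w)) :
    x = Elt.dprime n hn w ∨ Le k x (Elt.prime n hn w) := by
  cases h with
  | refl => exact Or.inl rfl
  | node_dprime => exact Or.inr (Le.node_prime _ _ _)
  | e_dprime _ _ _ _ hx => exact Or.inr (Le.e_prime _ _ _ _ hx)
  | q_dprime => exact Or.inr (Le.q_prime _)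

lemma Le.node0_le_prime0 {k : ℕ} {h0 h0' : 0 ≤ k} {v u : N 0}
    (h : Le k (Elt.node 0 h0 v) (Elt.prime 0 h0' u)) : v = u := by
  cases h; rfl

lemma Le.node0_le_dprime0 {k : ℕ} {h0 h0' : 0 ≤ k} {v u : N 0}
    (h : Le k (Elt.node 0 h0 v) (Elt.dprime 0 h0' u)) : v = u := by
  cases h; rfl

/-- In `P_k`, the element `p` is the join of every subset of `N_0` with at
least two elements, and these are the only non-trivial joins: if `y` is the join of a
nonempty set `X` with `y ∉ X`, then `y = p` and `X` is a non-singleton subset of `N_0`. -/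
theorem statement6 (k : ℕ) :
    (∀ X : Set (Elt k), X ⊆ {v | inN k 0 v} → (∃ u ∈ X, ∃ v ∈ X, u ≠ v) →
      IsLUB X Elt.p) ∧
    (∀ (y : Elt k) (X : Set (Elt k)), X.Nonempty → IsLUB X y → y ∉ X →
      y = Elt.p ∧ X ⊆ {v | inN k 0 v} ∧ ∃ u ∈ X, ∃ v ∈ X, u ≠ v) := by
  constructor
  · rintro X hX ⟨u, hu, v, hv, huv⟩
    obtain ⟨h0u, wu, rfl⟩ := hX hu
    obtain ⟨h0v, wv, rfl⟩ := hX hv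
    have hwuv : wu ≠ wv := by
      intro h; subst h; exact huv rfl
    constructor
    · intro x hx
      obtain ⟨h0, w, rfl⟩ := hX hx
      exact Le.node_p h0 w
    · intro z hz
      have h1 : Le k (Elt.node 0 h0u wu) z := hz hu
      have h2 : Le k (Elt.node 0 h0v wv) z := hz hv
      cases h1 with
      | refl =>
        exact absurd (h2.eq_of_le_node) (by simpa using Ne.symm hwuv)
      | node_p => exact Le.refl _
      | node_prime => exact absurd (h2.node0_le_prime0) (Ne.symm hwuv)
      | node_dprime => exact absurd (h2.node0_le_dprime0) (Ne.symm hwuv)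
  · rintro y X ⟨x0, hx0⟩ hlub hyX
    cases y with
    | p =>
      have hsub : X ⊆ {v | inN k 0 v} := by
        intro x hx
        rcases (hlub.1 hx).le_p with rfl | ⟨h0, w, rfl⟩
        · exact absurd hx hyX
        · exact ⟨h0, w, rfl⟩
      refine ⟨rfl, hsub, ?_⟩
      by_contra hne
      push_neg at hne
      have hub : x0 ∈ upperBounds X := by
        intro x hx
        rw [hne x hx x0 hx0]
      have := (hlub.2 hub).p_le
      rw [this] at hx0
      exact hyX hx0
    | q => exact absurd ((hlub.1 hx0).eq_of_le_q ▸ hx0) hyX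
    | node n hn w => exact absurd ((hlub.1 hx0).eq_of_le_node ▸ hx0) hyX
    | prime n hn w =>
      have hub : Elt.dprime n hn w ∈ upperBounds X := by
        intro x hx
        rcases (hlub.1 hx).le_prime with rfl | h
        · exact absurd hx hyX
        · exact h
      cases hlub.2 hub
    | dprime n hn w =>
      have hub : Elt.prime n hn w ∈ upperBounds X := by
        intro x hx
        rcases (hlub.1 hx).le_dprime with rfl | h
        · exact absurd hx hyX
        · exact h
      cases hlub.2 hub
end

section
/- For every k ∈ ω, every element of P_k \ ({p} ∪ N_0) is join-prime: if z ∈ P_k \ ({p} ∪ N_0), T ⊆ P_k is nonempty, ⋁T exists in P_k, and z ≤ ⋁T, then z ≤ t for some t ∈ T. -/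
open Cardinal

universe u

lemma le_dprime_of_le_prime {k n : ℕ} {hn : n ≤ k} {x : N n} {t : Elt k}
    (h : Le k t (Elt.prime n hn x)) (hne : t ≠ Elt.prime n hn x) :
    Le k t (Elt.dprime n hn x) := by
  cases h with
  | refl => exact absurd rfl hne
  | node_prime => exact Le.node_dprime _ _ _
  | e_prime m hm e y hy => exact Le.e_dprime _ _ _ _ hy
  | q_prime => exact Le.q_dprime _

lemma le_prime_of_le_dprime {k n : ℕ} {hn : n ≤ k} {x : N n} {t : Elt k}
    (h : Le k t (Elt.dprime n hn x)) (hne : t ≠ Elt.dprime n hn x) :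
    Le k t (Elt.prime n hn x) := by
  cases h with
  | refl => exact absurd rfl hne
  | node_dprime => exact Le.node_prime _ _ _
  | e_dprime m hm e y hy => exact Le.e_prime _ _ _ _ hy
  | q_dprime => exact Le.q_prime _

lemma contra_prime {k n : ℕ} {hn : n ≤ k} {x : N n} {T : Set (Elt k)}
    (hs : IsLUB T (Elt.prime n hn x)) (hT : Elt.prime n hn x ∉ T) : False := by
  have hub : Elt.dprime n hn x ∈ upperBounds T := by
    intro t ht
    have h1 : Le k t (Elt.prime n hn x) := hs.1 ht
    exact le_dprime_of_le_prime h1 (fun h => hT (h ▸ ht))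
  have h2 : Le k (Elt.prime n hn x) (Elt.dprime n hn x) := hs.2 hub
  cases h2

lemma contra_dprime {k n : ℕ} {hn : n ≤ k} {x : N n} {T : Set (Elt k)}
    (hs : IsLUB T (Elt.dprime n hn x)) (hT : Elt.dprime n hn x ∉ T) : False := by
  have hub : Elt.prime n hn x ∈ upperBounds T := by
    intro t ht
    have h1 : Le k t (Elt.dprime n hn x) := hs.1 ht
    exact le_prime_of_le_dprime h1 (fun h => hT (h ▸ ht))
  have h2 : Le k (Elt.dprime n hn x) (Elt.prime n hn x) := hs.2 hub
  cases h2

/-- Every element of `P_k \ ({p} ∪ N_0)` is join-prime. -/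
theorem statement7 (k : ℕ) (z : Elt k) (hzp : z ≠ Elt.p) (hz0 : ¬inN k 0 z)
    (T : Set (Elt k)) (hT : T.Nonempty) (s : Elt k) (hs : IsLUB T s) (hzs : z ≤ s) :
    ∃ t ∈ T, z ≤ t := by
  by_contra hcon
  push_neg at hcon
  have hzs' : Le k z s := hzs
  cases hzs' with
  | refl =>
    cases z with
    | p => exact absurd rfl hzp
    | q =>
      obtain ⟨t, ht⟩ := hT
      have : Le k t Elt.q := hs.1 ht
      rw [this.eq_of_le_q] at ht
      exact hcon _ ht (Le.refl _)
    | node n hn w =>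
      obtain ⟨t, ht⟩ := hT
      have : Le k t (Elt.node n hn w) := hs.1 ht
      rw [this.eq_of_le_node] at ht
      exact hcon _ ht (Le.refl _)
    | prime n hn w =>
      exact contra_prime hs (fun h => hcon _ h (Le.refl _))
    | dprime n hn w =>
      exact contra_dprime hs (fun h => hcon _ h (Le.refl _))
  | node_p h0 w => exact hz0 ⟨h0, w, rfl⟩
  | node_prime n hn w =>
    exact contra_prime hs (fun h => hcon _ h (Le.node_prime _ _ _))
  | node_dprime n hn w =>
    exact contra_dprime hs (fun h => hcon _ h (Le.node_dprime _ _ _))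
  | e_prime n hn e w hw =>
    exact contra_prime hs (fun h => hcon _ h (Le.e_prime _ _ _ _ hw))
  | e_dprime n hn e w hw =>
    exact contra_dprime hs (fun h => hcon _ h (Le.e_dprime _ _ _ _ hw))
  | q_prime w =>
    exact contra_prime hs (fun h => hcon _ h (Le.q_prime _))
  | q_dprime w =>
    exact contra_dprime hs (fun h => hcon _ h (Le.q_dprime _))
end

section
/- Let k ≥ 1 and let 0 ≤ n < k. If Γ is a (3,3)-filter of P_k and Γ contains at least 3 elements of N_n, then Γ contains at least 3 elements of N_{n+1}. -/
open Cardinal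

universe u

lemma le_prime_cases {k n : ℕ} {hn : n ≤ k} {w : N n} {c : Elt k}
    (h : Le k c (Elt.prime n hn w)) :
    c = Elt.prime n hn w ∨ c = Elt.node n hn w ∨
    (∃ (hn' : n + 1 ≤ k) (e : N (n + 1)), c = Elt.node (n + 1) hn' e ∧ w ∈ e.1) ∨
    (c = Elt.q ∧ n = k) := by
  cases h with
  | refl => exact Or.inl rfl
  | node_prime => exact Or.inr (Or.inl rfl)
  | e_prime n hn' e x hx => exact Or.inr (Or.inr (Or.inl ⟨hn', e, rfl, hx⟩))
  | q_prime x => exact Or.inr (Or.inr (Or.inr ⟨rfl, rfl⟩))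

lemma isGLB_pair_primes {k n : ℕ} (hn1 : n + 1 ≤ k) (x y : N n) (hxy : x ≠ y) :
    IsGLB ({Elt.prime n (Nat.le_of_succ_le hn1) x,
            Elt.prime n (Nat.le_of_succ_le hn1) y} : Set (Elt k))
      (Elt.node (n + 1) hn1 (mkE x y hxy)) := by
  constructor
  · rintro t (rfl | rfl)
    · exact Le.e_prime n hn1 _ x (by simp [mkE])
    · exact Le.e_prime n hn1 _ y (by simp [mkE])
  · intro c hc
    have hcx : Le k c (Elt.prime n (Nat.le_of_succ_le hn1) x) :=
      hc (Set.mem_insert _ _)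
    have hcy : Le k c (Elt.prime n (Nat.le_of_succ_le hn1) y) :=
      hc (Set.mem_insert_of_mem _ rfl)
    have hnk : n ≠ k := by omega
    rcases le_prime_cases hcx with rfl | rfl | ⟨hn', e, rfl, hxe⟩ | ⟨rfl, rfl⟩
    · rcases le_prime_cases hcy with h | h | ⟨hn', e, h, hye⟩ | ⟨h, rfl⟩ <;>
        simp_all
    · rcases le_prime_cases hcy with h | h | ⟨hn', e, h, hye⟩ | ⟨h, rfl⟩ <;>
        simp_all
    · rcases le_prime_cases hcy with h | h | ⟨hn'', e', h, hye⟩ | ⟨h, rfl⟩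
      · simp_all
      · simp_all
      · obtain ⟨-, he⟩ := Elt.node.inj h
        obtain rfl := eq_of_heq he
        have : e.1 = s(x, y) := (Sym2.mem_and_mem_iff hxy).mp ⟨hxe, hye⟩
        have : e = mkE x y hxy := Subtype.ext this
        subst this
        exact Le.refl _
      · simp_all
    · exact absurd rfl hnk

/-- For `k ≥ 1` and `n < k`: if a `(3,3)`-filter `Γ` of `P_k` contains at
least 3 elements of `N_n`, then it contains at least 3 elements of `N_{n+1}`. -/
theorem statement8 (k : ℕ) (hk : 1 ≤ k) (n : ℕ) (hn : n < k)
    (Γ : Set (Elt k)) (hΓ : IsMNFilter 3 3 Γ)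
    (h3 : ∃ x y z : Elt k, x ∈ Γ ∧ y ∈ Γ ∧ z ∈ Γ ∧
      inN k n x ∧ inN k n y ∧ inN k n z ∧ x ≠ y ∧ x ≠ z ∧ y ≠ z) :
    ∃ x y z : Elt k, x ∈ Γ ∧ y ∈ Γ ∧ z ∈ Γ ∧
      inN k (n + 1) x ∧ inN k (n + 1) y ∧ inN k (n + 1) z ∧ x ≠ y ∧ x ≠ z ∧ y ≠ z := by
  obtain ⟨x, y, z, hxΓ, hyΓ, hzΓ, ⟨hnx, wx, rfl⟩, ⟨hny, wy, rfl⟩, ⟨hnz, wz, rfl⟩,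
    hxy, hxz, hyz⟩ := h3
  have hn1 : n + 1 ≤ k := hn
  have hwxy : wx ≠ wy := fun h => hxy (by rw [h])
  have hwxz : wx ≠ wz := fun h => hxz (by rw [h])
  have hwyz : wy ≠ wz := fun h => hyz (by rw [h])
  obtain ⟨hup, hmeet, -⟩ := hΓ
  have hprime : ∀ w : N n, Elt.node n (Nat.le_of_succ_le hn1) w ∈ Γ →
      Elt.prime n (Nat.le_of_succ_le hn1) w ∈ Γ := fun w hw =>
    hup _ hw _ (Le.node_prime n _ w)
  have hcard : ∀ a b : Elt k, #({a, b} : Set (Elt k)) < 3 := by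
    intro a b
    calc #({a, b} : Set (Elt k)) ≤ #({b} : Set (Elt k)) + 1 := Cardinal.mk_insert_le
    _ ≤ 1 + 1 := by rw [Cardinal.mk_singleton]
    _ < 3 := by norm_num
  have key : ∀ (a b : N n) (hab : a ≠ b),
      Elt.node n (Nat.le_of_succ_le hn1) a ∈ Γ →
      Elt.node n (Nat.le_of_succ_le hn1) b ∈ Γ →
      Elt.node (n + 1) hn1 (mkE a b hab) ∈ Γ := by
    intro a b hab ha hb
    refine hmeet _ ?_ (hcard _ _) _ (isGLB_pair_primes hn1 a b hab)
    rintro t (rfl | rfl)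
    · exact hprime a ha
    · exact hprime b hb
  have hxΓ' : Elt.node n (Nat.le_of_succ_le hn1) wx ∈ Γ := hxΓ
  have hyΓ' : Elt.node n (Nat.le_of_succ_le hn1) wy ∈ Γ := hyΓ
  have hzΓ' : Elt.node n (Nat.le_of_succ_le hn1) wz ∈ Γ := hzΓ
  refine ⟨Elt.node (n + 1) hn1 (mkE wx wy hwxy),
    Elt.node (n + 1) hn1 (mkE wx wz hwxz),
    Elt.node (n + 1) hn1 (mkE wy wz hwyz),
    key wx wy hwxy hxΓ' hyΓ', key wx wz hwxz hxΓ' hzΓ', key wy wz hwyz hyΓ' hzΓ',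
    ⟨hn1, _, rfl⟩, ⟨hn1, _, rfl⟩, ⟨hn1, _, rfl⟩, ?_, ?_, ?_⟩ <;>
  · intro h
    obtain ⟨-, he⟩ := Elt.node.inj h
    have := Subtype.ext_iff.mp (eq_of_heq he)
    simp only [mkE, Sym2.eq_iff] at this
    tauto
end

section
/- For every k ∈ ω, the poset P_k is not (3,3)-representable. -/
open Cardinal

universe u

/-- A field of sets: a collection of subsets of `X` closed under finite unions,
finite intersections, and complements. -/
def IsFieldOfSets {X : Type u} (F : Set (Set X)) : Prop :=
  ∅ ∈ F ∧ Set.univ ∈ F ∧ (∀ A ∈ F, ∀ B ∈ F, A ∪ B ∈ F) ∧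
    (∀ A ∈ F, ∀ B ∈ F, A ∩ B ∈ F) ∧ (∀ A ∈ F, Aᶜ ∈ F)

/-- A poset `P` is `(α,β)`-representable if there is a field of sets `F` and an
injective map `h : P → F` preserving all existing meets of sets of cardinality `< α`
and all existing joins of sets of cardinality `< β`. -/
def IsRepresentable (α β : Cardinal.{u}) (P : Type u) [PartialOrder P] : Prop :=
  ∃ (X : Type u) (F : Set (Set X)) (h : P → Set X),
    IsFieldOfSets F ∧ (∀ p : P, h p ∈ F) ∧ Function.Injective h ∧
    (∀ S : Set P, #S < α → ∀ a : P, IsGLB S a → h a = ⋂ s ∈ S, h s) ∧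
    (∀ T : Set P, #T < β → ∀ a : P, IsLUB T a → h a = ⋃ t ∈ T, h t)

/-! A `(3,3)`-representation `h` preserves binary meets and joins, hence is monotone.
Take `t ∈ h p`. As `p = a ∨ b` for any two distinct `a, b ∈ N₀`, the point `t` lies in `h x`
for at least three `x ∈ N₀`. Since `e_{xy} = x' ∧ y'`, three such nodes at level `n` give three
at level `n + 1`, and at level `k` two of them give `t ∈ h q ⊆ h x'` for all `x ∈ N_k`. Going back
down, `e_{wx} = w' ∧ e_{wx}'` with `t ∈ h w` for some `w ≠ x` puts `t` in `h e_{wx} ⊆ h x'` for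
every `x`, and finally in `h x = h p ∩ h x'` for `x ∈ N₀`. So `h` is constant on `N₀`,
contradicting injectivity. -/

lemma Cardinal.mk_pair_lt_three {α : Type u} (a b : α) : #({a, b} : Set α) < 3 :=
  mk_insert_le.trans_lt (by rw [mk_singleton]; norm_num)

lemma exists_three_of_forall_ne_or {α : Type*} [Fintype α] (hα : 4 ≤ Fintype.card α)
    {P : α → Prop} (hP : ∀ x y, x ≠ y → P x ∨ P y) :
    ∃ x y z, x ≠ y ∧ x ≠ z ∧ y ≠ z ∧ P x ∧ P y ∧ P z := by
  classical
  have hcompl : (Finset.univ.filter P)ᶜ.card ≤ 1 := Finset.card_le_one.2 fun x hx y hy => by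
    by_contra hxy
    simp only [Finset.compl_filter, Finset.mem_filter] at hx hy
    exact (hP x y hxy).elim hx.2 hy.2
  obtain ⟨x, y, z, hx, hy, hz, hxy, hxz, hyz⟩ := Finset.two_lt_card_iff.1 (by
    rw [← Finset.card_compl_add_card (Finset.univ.filter P)] at hα
    omega : 2 < (Finset.univ.filter P).card)
  simp only [Finset.mem_filter] at hx hy hz
  exact ⟨x, y, z, hxy, hxz, hyz, hx.2, hy.2, hz.2⟩

lemma isGLB_pair_of_forall_eq {P : Type*} [Preorder P] {a b c : P} (ha : c ≤ a) (hb : c ≤ b)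
    (h : ∀ z, z ≤ a → z ≤ b → z = c) : IsGLB {a, b} c :=
  ⟨by simp [ha, hb], fun z hz => (h z (hz (by simp)) (hz (by simp))).le⟩

lemma isLUB_pair_of_forall_eq {P : Type*} [Preorder P] {a b c : P} (ha : a ≤ c) (hb : b ≤ c)
    (h : ∀ z, a ≤ z → b ≤ z → z = c) : IsLUB {a, b} c :=
  isGLB_pair_of_forall_eq (P := Pᵒᵈ) ha hb h

structure PreservesPairBounds {P X : Type*} [PartialOrder P] (h : P → Set X) : Prop where
  glb ⦃a b c : P⦄ : IsGLB {a, b} c → h c = h a ∩ h b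
  lub ⦃a b c : P⦄ : IsLUB {a, b} c → h c = h a ∪ h b

lemma PreservesPairBounds.monotone {P X : Type*} [PartialOrder P] {h : P → Set X}
    (hh : PreservesPairBounds h) : Monotone h := fun a b hab =>
  Set.union_eq_right.1 (hh.lub ⟨by simp [hab], fun _ hz => hz (by simp)⟩).symm

lemma IsRepresentable.exists_injective_preservesPairBounds {P : Type u} [PartialOrder P]
    (hP : IsRepresentable 3 3 P) :
    ∃ (X : Type u) (h : P → Set X), Function.Injective h ∧ PreservesPairBounds h := by
  obtain ⟨X, -, h, -, -, hinj, hglb, hlub⟩ := hP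
  refine ⟨X, h, hinj, fun a b c hc => ?_, fun a b c hc => ?_⟩
  · rw [hglb _ (mk_pair_lt_three a b) c hc, Set.biInter_pair]
  · rw [hlub _ (mk_pair_lt_three a b) c hc, Set.biUnion_pair]

section

variable {n : ℕ}

lemma mkE_mem_left (x y : N n) (h : x ≠ y) : x ∈ (mkE x y h).1 := by
  simp [mkE]

lemma mkE_mem_right (x y : N n) (h : x ≠ y) : y ∈ (mkE x y h).1 := by
  simp [mkE]

lemma mkE_eq_mkE_iff {x y u v : N n} (h : x ≠ y) (h' : u ≠ v) :
    mkE x y h = mkE u v h' ↔ (x = u ∧ y = v) ∨ (x = v ∧ y = u) :=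
  Subtype.ext_iff.trans Sym2.eq_iff

lemma eq_mkE_of_mem {e : N (n + 1)} {x y : N n} (hxy : x ≠ y) (hx : x ∈ e.1) (hy : y ∈ e.1) :
    e = mkE x y hxy :=
  Subtype.ext ((Sym2.mem_and_mem_iff hxy).1 ⟨hx, hy⟩)

end

section

variable {k : ℕ}

lemma isLUB_node_node_p {x y : N 0} (hxy : x ≠ y) :
    IsLUB {Elt.node 0 k.zero_le x, Elt.node 0 k.zero_le y} (Elt.p : Elt k) := by
  refine isLUB_pair_of_forall_eq (Le.node_p _ x) (Le.node_p _ y) fun z hx hy => ?_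
  cases hx <;> cases hy
  all_goals first | rfl | exact absurd rfl hxy

lemma isGLB_p_prime (x : N 0) :
    IsGLB {Elt.p, Elt.prime 0 k.zero_le x} (Elt.node 0 k.zero_le x : Elt k) := by
  refine isGLB_pair_of_forall_eq (Le.node_p _ x) (Le.node_prime _ _ x) fun z hx hy => ?_
  cases hx <;> cases hy
  rfl

lemma isGLB_prime_prime_mkE {n : ℕ} (hn : n + 1 ≤ k) {x y : N n} (hxy : x ≠ y) :
    IsGLB {Elt.prime n (Nat.le_of_succ_le hn) x, Elt.prime n (Nat.le_of_succ_le hn) y}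
      (Elt.node (n + 1) hn (mkE x y hxy) : Elt k) := by
  refine isGLB_pair_of_forall_eq (Le.e_prime n hn _ x (mkE_mem_left x y hxy))
    (Le.e_prime n hn _ y (mkE_mem_right x y hxy)) fun z hx hy => ?_
  cases hx <;> cases hy
  case e_prime.e_prime => exact congrArg (Elt.node _ hn) (eq_mkE_of_mem hxy ‹_› ‹_›)
  all_goals first | exact absurd rfl hxy | omega

lemma isGLB_prime_prime_of_mem {n : ℕ} (hn : n + 1 ≤ k) (e : N (n + 1)) {w : N n}
    (hw : w ∈ e.1) :
    IsGLB {Elt.prime n (Nat.le_of_succ_le hn) w, Elt.prime (n + 1) hn e}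
      (Elt.node (n + 1) hn e : Elt k) := by
  refine isGLB_pair_of_forall_eq (Le.e_prime n hn e w hw) (Le.node_prime _ _ _) fun z hx hy => ?_
  cases hx <;> cases hy
  rfl

lemma isGLB_prime_prime_q {x y : N k} (hxy : x ≠ y) :
    IsGLB {Elt.prime k le_rfl x, Elt.prime k le_rfl y} (Elt.q : Elt k) := by
  refine isGLB_pair_of_forall_eq (Le.q_prime x) (Le.q_prime y) fun z hx hy => ?_
  cases hx <;> cases hy
  all_goals first | rfl | exact absurd rfl hxy | omega

variable {X : Type*} {h : Elt k → Set X} {t : X}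

def MemThreeNodes (h : Elt k → Set X) (t : X) (n : ℕ) (hn : n ≤ k) : Prop :=
  ∃ x y z : N n, x ≠ y ∧ x ≠ z ∧ y ≠ z ∧
    t ∈ h (.node n hn x) ∧ t ∈ h (.node n hn y) ∧ t ∈ h (.node n hn z)

lemma MemThreeNodes.exists_ne {n : ℕ} {hn : n ≤ k} (ht : MemThreeNodes h t n hn) (x : N n) :
    ∃ w, w ≠ x ∧ t ∈ h (.node n hn w) := by
  obtain ⟨y, z, -, hyz, -, -, hy, hz, -⟩ := ht
  by_cases hyx : y = x
  · exact ⟨z, hyx ▸ hyz.symm, hz⟩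
  · exact ⟨y, hyx, hy⟩

lemma memThreeNodes_zero (hh : PreservesPairBounds h) (ht : t ∈ h .p) :
    MemThreeNodes h t 0 k.zero_le :=
  exists_three_of_forall_ne_or (α := Fin 4) (by simp) fun x y hxy => by
    rwa [hh.lub (isLUB_node_node_p hxy)] at ht

lemma MemThreeNodes.succ (hh : PreservesPairBounds h) {n : ℕ} (hn : n + 1 ≤ k)
    (ht : MemThreeNodes h t n (Nat.le_of_succ_le hn)) : MemThreeNodes h t (n + 1) hn := by
  obtain ⟨x, y, z, hxy, hxz, hyz, hx, hy, hz⟩ := ht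
  have mem_mkE : ∀ {u v : N n} (huv : u ≠ v), t ∈ h (.node n _ u) → t ∈ h (.node n _ v) →
      t ∈ h (.node (n + 1) hn (mkE u v huv)) := fun huv hu hv => by
    rw [hh.glb (isGLB_prime_prime_mkE hn huv)]
    exact ⟨hh.monotone (Le.node_prime _ _ _) hu, hh.monotone (Le.node_prime _ _ _) hv⟩
  refine ⟨_, _, _, ?_, ?_, ?_, mem_mkE hxy hx hy, mem_mkE hxz hx hz, mem_mkE hyz hy hz⟩ <;>
    simp only [ne_eq, mkE_eq_mkE_iff] <;> tauto

lemma memThreeNodes (hh : PreservesPairBounds h) (ht : t ∈ h .p) :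
    ∀ n hn, MemThreeNodes h t n hn
  | 0, _ => memThreeNodes_zero hh ht
  | n + 1, hn => (memThreeNodes hh ht n _).succ hh hn

lemma mem_q (hh : PreservesPairBounds h) (ht : t ∈ h .p) : t ∈ h .q := by
  obtain ⟨x, y, -, hxy, -, -, hx, hy, -⟩ := memThreeNodes hh ht k le_rfl
  rw [hh.glb (isGLB_prime_prime_q hxy)]
  exact ⟨hh.monotone (Le.node_prime _ _ _) hx, hh.monotone (Le.node_prime _ _ _) hy⟩

lemma mem_prime (hh : PreservesPairBounds h) (ht : t ∈ h .p) {n : ℕ} (hn : n ≤ k) (x : N n) :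
    t ∈ h (.prime n hn x) := by
  induction hn using Nat.decreasingInduction with
  | self => exact hh.monotone (Le.q_prime x) (mem_q hh ht)
  | of_succ n hn ih =>
    obtain ⟨w, hwx, hw⟩ := (memThreeNodes hh ht n _).exists_ne x
    have he : t ∈ h (.node (n + 1) hn (mkE w x hwx)) := by
      rw [hh.glb (isGLB_prime_prime_of_mem hn _ (mkE_mem_left w x hwx))]
      exact ⟨hh.monotone (Le.node_prime _ _ _) hw, ih _⟩
    exact hh.monotone (Le.e_prime n hn _ x (mkE_mem_right w x hwx)) he

lemma mem_node_zero (hh : PreservesPairBounds h) (ht : t ∈ h .p) (x : N 0) :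
    t ∈ h (.node 0 k.zero_le x) := by
  rw [hh.glb (isGLB_p_prime x)]
  exact ⟨ht, mem_prime hh ht _ x⟩

end

/-- For every `k`, the poset `P_k` is not `(3,3)`-representable. -/
theorem statement11 (k : ℕ) : ¬IsRepresentable 3 3 (Elt k) := by
  intro hk
  obtain ⟨X, h, hinj, hh⟩ := hk.exists_injective_preservesPairBounds
  have h_node : ∀ x : N 0, h (.node 0 k.zero_le x) = h .p := fun x =>
    (hh.monotone (Le.node_p _ x)).antisymm fun t ht => mem_node_zero hh ht x
  have h01 := hinj ((h_node (0 : Fin 4)).trans (h_node (1 : Fin 4)).symm)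
  exact Fin.zero_ne_one (eq_of_heq (Elt.node.inj h01).2)
end

section
/- Let U be a non-principal ultrafilter on ω and consider the ultraproduct ∏_U P_i of the posets P_0, P_1, P_2, .... Let k ∈ ω, let x ∈ P_k \ {q}, and let [y] ∈ ∏_U P_i. Then [x̄] < [y] if and only if one of the following holds: (1) x ∈ N_0 and [y] = [p̄]; (2) x ∈ N_n for some n and [y] ∈ {[x̄'], [x̄'']}; or (3) x = e_{uv} ∈ N_{n+1} for some u, v ∈ N_n and [y] ∈ {[ū'], [ū''], [v̄'], [v̄'']}. -/
open Cardinal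

universe u

/-- The canonical embedding of `P_k` into `P_l` for `k ≤ l`. -/
def emb {k l : ℕ} (h : k ≤ l) : Elt k → Elt l
  | .p => .p
  | .q => .q
  | .node n hn w => .node n (hn.trans h) w
  | .prime n hn w => .prime n (hn.trans h) w
  | .dprime n hn w => .dprime n (hn.trans h) w

/-- For `x ∈ P_k`, the sequence `x̄` whose `i`-th term, for `i ≥ k`, is the image of `x`
in `P_i` under the canonical embeddings (terms below `k` are irrelevant modulo a
non-principal ultrafilter). -/
def bar (k : ℕ) (x : Elt k) : ∀ i : ℕ, Elt i := fun i =>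
  if h : k ≤ i then emb h x else Elt.p

/-- The element `[x̄]` of the ultraproduct `∏_U P_i` determined by `x ∈ P_k`. -/
def cls (U : Ultrafilter ℕ) {k : ℕ} (x : Elt k) : UProd U Elt :=
  Quotient.mk (upSetoid U Elt) (bar k x)

/-!
For `x ≠ q` in `P_k` and `i ≥ k`, the canonical embedding `P_k → P_i` maps the upper set of
`x` bijectively onto the upper set of its image: only `q` acquires new upper bounds in `P_i`,
namely the primes of the new top level. A non-principal ultrafilter on `ℕ` contains every
cofinite set, so an element above `[x̄]` agrees `U`-almost everywhere with one of the finitely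
many sequences `z̄`, `z ∈ P_k`, and `[x̄] < [z̄]` iff `x < z`. The theorem is then the list of
strict upper bounds of `x` in `P_k`.
-/

instance N.instFinite : ∀ n, Finite (N n)
  | 0 => inferInstanceAs (Finite (Fin 4))
  | n + 1 =>
    have := N.instFinite n
    inferInstanceAs (Finite {s : Sym2 (N n) // ¬s.IsDiag})

theorem N.exists_eq_mkE {n : ℕ} {e : N (n + 1)} {u : N n} (hu : u ∈ e.1) :
    ∃ (v : N n) (huv : u ≠ v), e = mkE u v huv := by
  obtain ⟨v, hv⟩ := Sym2.mem_iff_exists.mp hu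
  have huv : u ≠ v := fun h => e.2 (by simp [hv, h])
  exact ⟨v, huv, Subtype.ext hv⟩

namespace Elt

variable {k l : ℕ}

def decode : Bool ⊕ (Σ n : Fin (k + 1), N n) ⊕ (Σ n : Fin (k + 1), N n) ⊕
    (Σ n : Fin (k + 1), N n) → Elt k
  | .inl true => .p
  | .inl false => .q
  | .inr (.inl ⟨n, w⟩) => .node n (Nat.le_of_lt_succ n.isLt) w
  | .inr (.inr (.inl ⟨n, w⟩)) => .prime n (Nat.le_of_lt_succ n.isLt) w
  | .inr (.inr (.inr ⟨n, w⟩)) => .dprime n (Nat.le_of_lt_succ n.isLt) w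

theorem decode_surjective : Function.Surjective (decode (k := k)) := by
  rintro (_ | _ | ⟨n, hn, w⟩ | ⟨n, hn, w⟩ | ⟨n, hn, w⟩)
  exacts [⟨.inl true, rfl⟩, ⟨.inl false, rfl⟩,
    ⟨.inr (.inl ⟨⟨n, Nat.lt_succ_of_le hn⟩, w⟩), rfl⟩,
    ⟨.inr (.inr (.inl ⟨⟨n, Nat.lt_succ_of_le hn⟩, w⟩)), rfl⟩,
    ⟨.inr (.inr (.inr ⟨⟨n, Nat.lt_succ_of_le hn⟩, w⟩)), rfl⟩]

instance instFinite : Finite (Elt k) :=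
  Finite.of_surjective _ decode_surjective

theorem lt_iff_of_ne_q {x z : Elt k} (hx : x ≠ .q) :
    x < z ↔ (inN k 0 x ∧ z = .p) ∨
      (∃ (n : ℕ) (hn : n ≤ k) (w : N n), x = .node n hn w ∧
        (z = .prime n hn w ∨ z = .dprime n hn w)) ∨
      (∃ (n : ℕ) (hn : n + 1 ≤ k) (u v : N n) (huv : u ≠ v),
        x = .node (n + 1) hn (mkE u v huv) ∧
        (z = .prime n (Nat.le_of_succ_le hn) u ∨ z = .dprime n (Nat.le_of_succ_le hn) u ∨
          z = .prime n (Nat.le_of_succ_le hn) v ∨ z = .dprime n (Nat.le_of_succ_le hn) v)) := by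
  constructor
  · rintro ⟨hxz, hzx⟩
    cases hxz with
    | refl => exact absurd (Le.refl _) hzx
    | node_p h0 w => exact .inl ⟨⟨h0, w, rfl⟩, rfl⟩
    | node_prime n hn w => exact .inr (.inl ⟨n, hn, w, rfl, .inl rfl⟩)
    | node_dprime n hn w => exact .inr (.inl ⟨n, hn, w, rfl, .inr rfl⟩)
    | e_prime n hn e u hu =>
      obtain ⟨v, huv, rfl⟩ := N.exists_eq_mkE hu
      exact .inr (.inr ⟨n, hn, u, v, huv, rfl, .inl rfl⟩)
    | e_dprime n hn e u hu =>
      obtain ⟨v, huv, rfl⟩ := N.exists_eq_mkE hu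
      exact .inr (.inr ⟨n, hn, u, v, huv, rfl, .inr (.inl rfl)⟩)
    | q_prime => exact absurd rfl hx
    | q_dprime => exact absurd rfl hx
  · have mem_left {n} {u v : N n} (huv : u ≠ v) : u ∈ (mkE u v huv).1 :=
      Sym2.mem_mk_left u v
    have mem_right {n} {u v : N n} (huv : u ≠ v) : v ∈ (mkE u v huv).1 :=
      Sym2.mem_mk_right u v
    rintro (⟨⟨h0, w, rfl⟩, rfl⟩ | ⟨n, hn, w, rfl, rfl | rfl⟩ |
      ⟨n, hn, u, v, huv, rfl, rfl | rfl | rfl | rfl⟩)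
    · exact lt_of_le_of_ne (Le.node_p h0 w) (by simp)
    · exact lt_of_le_of_ne (Le.node_prime n hn w) (by simp)
    · exact lt_of_le_of_ne (Le.node_dprime n hn w) (by simp)
    · exact lt_of_le_of_ne (Le.e_prime n hn _ u (mem_left huv)) (by simp)
    · exact lt_of_le_of_ne (Le.e_dprime n hn _ u (mem_left huv)) (by simp)
    · exact lt_of_le_of_ne (Le.e_prime n hn _ v (mem_right huv)) (by simp)
    · exact lt_of_le_of_ne (Le.e_dprime n hn _ v (mem_right huv)) (by simp)

theorem emb_injective (h : k ≤ l) : Function.Injective (emb h) := by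
  rintro (_ | _ | ⟨⟩ | ⟨⟩ | ⟨⟩) (_ | _ | ⟨⟩ | ⟨⟩ | ⟨⟩) hxz <;> simp_all [emb]

theorem emb_mono (h : k ≤ l) {x z : Elt k} (hx : x ≠ .q) (hxz : x ≤ z) : emb h x ≤ emb h z := by
  cases hxz with
  | refl => exact Le.refl _
  | node_p h0 w => exact Le.node_p l.zero_le w
  | node_prime n hn w => exact Le.node_prime n (hn.trans h) w
  | node_dprime n hn w => exact Le.node_dprime n (hn.trans h) w
  | e_prime n hn e w hw => exact Le.e_prime n (hn.trans h) e w hw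
  | e_dprime n hn e w hw => exact Le.e_dprime n (hn.trans h) e w hw
  | q_prime | q_dprime => exact absurd rfl hx

theorem exists_eq_emb_of_emb_le (h : k ≤ l) {x : Elt k} {w : Elt l} (hx : x ≠ .q)
    (hxw : emb h x ≤ w) : ∃ z, x ≤ z ∧ w = emb h z := by
  cases x with
  | p => cases hxw; exact ⟨.p, Le.refl _, rfl⟩
  | q => exact absurd rfl hx
  | node n hn v =>
    cases hxw with
    | refl => exact ⟨_, Le.refl _, rfl⟩
    | node_p => exact ⟨.p, Le.node_p _ _, rfl⟩
    | node_prime => exact ⟨_, Le.node_prime n hn v, rfl⟩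
    | node_dprime => exact ⟨_, Le.node_dprime n hn v, rfl⟩
    | e_prime m _ e u hu => exact ⟨_, Le.e_prime m hn e u hu, rfl⟩
    | e_dprime m _ e u hu => exact ⟨_, Le.e_dprime m hn e u hu, rfl⟩
  | prime n hn v => cases hxw; exact ⟨_, Le.refl _, rfl⟩
  | dprime n hn v => cases hxw; exact ⟨_, Le.refl _, rfl⟩

theorem emb_le_emb_iff (h : k ≤ l) {x z : Elt k} (hx : x ≠ .q) :
    emb h x ≤ emb h z ↔ x ≤ z := by
  refine ⟨fun hxz => ?_, emb_mono h hx⟩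
  obtain ⟨z', hxz', hz⟩ := exists_eq_emb_of_emb_le h hx hxz
  rwa [emb_injective h hz]

end Elt

theorem Ultrafilter.eventually_ge_of_ne_pure {U : Ultrafilter ℕ} (hU : ∀ i : ℕ, U ≠ pure i)
    (k : ℕ) : ∀ᶠ i in U, k ≤ i :=
  (U.le_cofinite_or_eq_pure.resolve_right fun ⟨i, hi⟩ => hU i hi)
    (Nat.cofinite_eq_atTop ▸ Filter.eventually_ge_atTop k)

theorem bar_of_le {k i : ℕ} (x : Elt k) (h : k ≤ i) : bar k x i = emb h x :=
  dif_pos h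

section Ultraproduct

variable {U : Ultrafilter ℕ} {k : ℕ}

theorem cls_eq_cls_iff (hU : ∀ i : ℕ, U ≠ pure i) {x z : Elt k} :
    cls U x = cls U z ↔ x = z := by
  have h : ∀ᶠ i in U, (bar k x i = bar k z i ↔ x = z) :=
    (U.eventually_ge_of_ne_pure hU k).mono fun i hi => by
      rw [bar_of_le x hi, bar_of_le z hi, (Elt.emb_injective hi).eq_iff]
  exact Quotient.eq.trans ((Filter.eventually_congr h).trans Filter.eventually_const)

theorem cls_le_cls_iff (hU : ∀ i : ℕ, U ≠ pure i) {x z : Elt k} (hx : x ≠ .q) :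
    cls U x ≤ cls U z ↔ x ≤ z := by
  have h : ∀ᶠ i in U, (bar k x i ≤ bar k z i ↔ x ≤ z) :=
    (U.eventually_ge_of_ne_pure hU k).mono fun i hi => by
      rw [bar_of_le x hi, bar_of_le z hi, Elt.emb_le_emb_iff hi hx]
  exact (Filter.eventually_congr h).trans Filter.eventually_const

theorem cls_lt_cls_iff (hU : ∀ i : ℕ, U ≠ pure i) {x z : Elt k} (hx : x ≠ .q) :
    cls U x < cls U z ↔ x < z := by
  rw [lt_iff_le_and_ne, lt_iff_le_and_ne, cls_le_cls_iff hU hx, Ne, cls_eq_cls_iff hU]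

theorem exists_cls_eq_of_cls_le (hU : ∀ i : ℕ, U ≠ pure i) {x : Elt k} (hx : x ≠ .q)
    {y : ∀ i, Elt i} (h : cls U x ≤ Quotient.mk (upSetoid U Elt) y) :
    ∃ z : Elt k, Quotient.mk (upSetoid U Elt) y = cls U z := by
  have h' : ∀ᶠ i in U, ∃ z : Elt k, y i = bar k z i := by
    filter_upwards [(h : ∀ᶠ i in U, bar k x i ≤ y i), U.eventually_ge_of_ne_pure hU k]
      with i hle hi
    rw [bar_of_le x hi] at hle
    obtain ⟨z, -, hz⟩ := Elt.exists_eq_emb_of_emb_le hi hx hle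
    exact ⟨z, hz.trans (bar_of_le z hi).symm⟩
  obtain ⟨z, hz⟩ := Ultrafilter.eventually_exists_iff.mp h'
  exact ⟨z, Quotient.sound hz⟩

theorem cls_lt_iff_exists (hU : ∀ i : ℕ, U ≠ pure i) {x : Elt k} (hx : x ≠ .q)
    {y : ∀ i, Elt i} :
    cls U x < Quotient.mk (upSetoid U Elt) y ↔
      ∃ z : Elt k, x < z ∧ Quotient.mk (upSetoid U Elt) y = cls U z := by
  constructor
  · intro h
    obtain ⟨z, hz⟩ := exists_cls_eq_of_cls_le hU hx h.le
    exact ⟨z, (cls_lt_cls_iff hU hx).mp (hz ▸ h), hz⟩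
  · rintro ⟨z, hxz, hz⟩
    exact hz ▸ (cls_lt_cls_iff hU hx).mpr hxz

end Ultraproduct

/-- Characterization of the elements of the ultraproduct `∏_U P_i` lying
strictly above `[x̄]` for `x ∈ P_k \ {q}`. -/
theorem statement13 (U : Ultrafilter ℕ) (hU : ∀ i : ℕ, U ≠ pure i)
    (k : ℕ) (x : Elt k) (hx : x ≠ Elt.q) (y : ∀ i : ℕ, Elt i) :
    cls U x < Quotient.mk (upSetoid U Elt) y ↔
      ((inN k 0 x ∧ Quotient.mk (upSetoid U Elt) y = cls U (Elt.p : Elt k)) ∨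
       (∃ (n : ℕ) (hn : n ≤ k) (w : N n), x = Elt.node n hn w ∧
         (Quotient.mk (upSetoid U Elt) y = cls U (Elt.prime n hn w) ∨
          Quotient.mk (upSetoid U Elt) y = cls U (Elt.dprime n hn w))) ∨
       (∃ (n : ℕ) (hn : n + 1 ≤ k) (u v : N n) (huv : u ≠ v),
         x = Elt.node (n + 1) hn (mkE u v huv) ∧
         (Quotient.mk (upSetoid U Elt) y = cls U (Elt.prime n (Nat.le_of_succ_le hn) u) ∨
          Quotient.mk (upSetoid U Elt) y = cls U (Elt.dprime n (Nat.le_of_succ_le hn) u) ∨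
          Quotient.mk (upSetoid U Elt) y = cls U (Elt.prime n (Nat.le_of_succ_le hn) v) ∨
          Quotient.mk (upSetoid U Elt) y = cls U (Elt.dprime n (Nat.le_of_succ_le hn) v)))) := by
  rw [cls_lt_iff_exists hU hx]
  constructor
  · rintro ⟨z, hxz, hY⟩
    rcases (Elt.lt_iff_of_ne_q hx).mp hxz with
      ⟨h0, rfl⟩ | ⟨n, hn, w, hxw, rfl | rfl⟩ | ⟨n, hn, u, v, huv, hxe, rfl | rfl | rfl | rfl⟩
    exacts [.inl ⟨h0, hY⟩, .inr (.inl ⟨n, hn, w, hxw, .inl hY⟩),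
      .inr (.inl ⟨n, hn, w, hxw, .inr hY⟩), .inr (.inr ⟨n, hn, u, v, huv, hxe, .inl hY⟩),
      .inr (.inr ⟨n, hn, u, v, huv, hxe, .inr (.inl hY)⟩),
      .inr (.inr ⟨n, hn, u, v, huv, hxe, .inr (.inr (.inl hY))⟩),
      .inr (.inr ⟨n, hn, u, v, huv, hxe, .inr (.inr (.inr hY))⟩)]
  · rintro (⟨h0, hY⟩ | ⟨n, hn, w, hxw, hY | hY⟩ |
        ⟨n, hn, u, v, huv, hxe, hY | hY | hY | hY⟩) <;>
      refine ⟨_, (Elt.lt_iff_of_ne_q hx).mpr ?_, hY⟩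
    exacts [.inl ⟨h0, rfl⟩, .inr (.inl ⟨n, hn, w, hxw, .inl rfl⟩),
      .inr (.inl ⟨n, hn, w, hxw, .inr rfl⟩), .inr (.inr ⟨n, hn, u, v, huv, hxe, .inl rfl⟩),
      .inr (.inr ⟨n, hn, u, v, huv, hxe, .inr (.inl rfl)⟩),
      .inr (.inr ⟨n, hn, u, v, huv, hxe, .inr (.inr (.inl rfl))⟩),
      .inr (.inr ⟨n, hn, u, v, huv, hxe, .inr (.inr (.inr rfl))⟩)]
end
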